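/- Let α > 0 and β ≥ 0, and for each a ≥ 0 let b_a > 0 be the unique constant with ∫₀^∞ dz/√(α²z⁴ + (α² + b_a² + a⁴)z² + b_a²) = π/2. Then there exists a = a(α, β) ≥ 0 such that a² ∫₀^∞ dz/((1 + z²)√(α²z⁴ + (α² + b_a² + a⁴)z² + b_a²)) = β/2. -/

import Mathlib

/-!
The constraint `F α a (b a) = π / 2` defines `b` implicitly. Since `F` is strictly decreasing in
both `a` and `y` and continuous in `a`, `b` is strictly decreasing, and the intermediate value
theorem in `a` shows that `b` maps each `[x, x']` onto `[b x', b x]`; a monotone function with this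
property is continuous. Hence `f a = a² G α a (b a)` is continuous on `[0, ∞)` with `f 0 = 0`.
On the other hand `F - G = ∫ z² / ((1 + z²) √radicand)` is at most `1 / (2a) + (π/2 - arctan a) / α`
(bound `√radicand` below by `a² z` for `z ≤ a` and by `α z²` beyond), so `G α a (b a) → π / 2`,
`f a → ∞`, and the intermediate value theorem yields `f a = β / 2`.
-/

open Real MeasureTheory Set Filter Topology

theorem StrictMonoOn.continuousOn_Ici_of_surjOn_Icc {α β : Type*} [LinearOrder α]
    [TopologicalSpace α] [OrderTopology α] [NoMaxOrder α] [LinearOrder β] [TopologicalSpace β]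
    [OrderTopology β] [DenselyOrdered β] {f : α → β} {p : α} (hf : StrictMonoOn f (Ici p))
    (hsurj : ∀ x ∈ Ici p, ∀ y, x ≤ y → SurjOn f (Icc x y) (Icc (f x) (f y))) :
    ContinuousOn f (Ici p) := by
  intro x hx
  obtain ⟨x', hxx'⟩ := exists_gt x
  have hx' : x' ∈ Ici p := le_trans hx hxx'.le
  have hright : ContinuousWithinAt f (Ici x) x :=
    (hf.mono (Icc_subset_Ici_iff hxx'.le |>.2 hx)).continuousWithinAt_right_of_image_mem_nhdsWithin
      (Icc_mem_nhdsGE hxx')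
      (mem_of_superset (Icc_mem_nhdsGE (hf hx hx' hxx')) (hsurj x hx x' hxx'.le))
  rcases (mem_Ici.1 hx).eq_or_lt with rfl | hpx
  · exact hright
  have hleft : ContinuousWithinAt f (Iic x) x :=
    (hf.mono Icc_subset_Ici_self).continuousWithinAt_left_of_image_mem_nhdsWithin
      (Icc_mem_nhdsLE hpx)
      (mem_of_superset (Icc_mem_nhdsLE (hf self_mem_Ici hx hpx)) (hsurj p self_mem_Ici x hx))
  exact (continuousAt_iff_continuous_left_right.2 ⟨hleft, hright⟩).continuousWithinAt

theorem setIntegral_lt_setIntegral {X : Type*} [MeasurableSpace X] {μ : Measure X} {s : Set X}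
    {f g : X → ℝ} (hs : MeasurableSet s) (hμs : μ s ≠ 0) (hf : IntegrableOn f s μ)
    (hg : IntegrableOn g s μ) (hlt : ∀ x ∈ s, f x < g x) :
    ∫ x in s, f x ∂μ < ∫ x in s, g x ∂μ := by
  rw [← sub_pos, ← integral_sub hg hf, setIntegral_pos_iff_support_of_nonneg_ae
    ((ae_restrict_iff' hs).2 (Eventually.of_forall fun x hx => sub_nonneg.2 (hlt x hx).le))
    (hg.sub hf)]
  rwa [inter_eq_self_of_subset_right fun x hx =>
    Function.mem_support.2 (sub_ne_zero.2 (hlt x hx).ne'), pos_iff_ne_zero]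

lemma abs_inv_one_add_sq_le_one (z : ℝ) : |(1 + z ^ 2)⁻¹| ≤ 1 := by
  rw [abs_of_pos (by positivity)]
  exact inv_le_one_of_one_le₀ (le_add_of_nonneg_right (sq_nonneg z))

section LevelCurve

variable {Φ : ℝ → ℝ → ℝ} {b : ℝ → ℝ} {c : ℝ}

theorem strictAntiOn_of_level (hΦa : ∀ y, 0 < y → StrictAntiOn (Φ · y) (Ici 0))
    (hΦy : ∀ a, 0 ≤ a → AntitoneOn (Φ a) (Ioi 0)) (hb : ∀ a, 0 ≤ a → 0 < b a ∧ Φ a (b a) = c) :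
    StrictAntiOn b (Ici 0) := by
  intro a ha a' ha' haa'
  by_contra! hle
  have : Φ a' (b a') < Φ a (b a) :=
    ((hΦy a' ha') (hb a ha).1 (hb a' ha').1 hle).trans_lt (hΦa (b a) (hb a ha).1 ha ha' haa')
  rw [(hb a ha).2, (hb a' ha').2] at this
  exact this.false

theorem surjOn_Icc_of_level (hΦc : ∀ y, 0 < y → ContinuousOn (Φ · y) (Ici 0))
    (hΦy : ∀ a, 0 ≤ a → StrictAntiOn (Φ a) (Ioi 0)) (hb : ∀ a, 0 ≤ a → 0 < b a ∧ Φ a (b a) = c)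
    {x x' : ℝ} (hx : 0 ≤ x) (hxx' : x ≤ x') : SurjOn b (Icc x x') (Icc (b x') (b x)) := by
  rintro v ⟨hv', hv⟩
  have hx' : 0 ≤ x' := hx.trans hxx'
  have hvpos : 0 < v := (hb x' hx').1.trans_le hv'
  have hlow : Φ x' v ≤ c := (hb x' hx').2 ▸ (hΦy x' hx').antitoneOn (hb x' hx').1 hvpos hv'
  have hupp : c ≤ Φ x v := (hb x hx).2 ▸ (hΦy x hx).antitoneOn hvpos (hb x hx).1 hv
  obtain ⟨a, ha, hΦ⟩ := intermediate_value_Icc' hxx'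
    ((hΦc v hvpos).mono (Icc_subset_Ici_iff hxx' |>.2 hx)) ⟨hlow, hupp⟩
  have ha0 : 0 ≤ a := hx.trans ha.1
  exact ⟨a, ha, (hΦy a ha0).injOn (hb a ha0).1 hvpos ((hb a ha0).2.trans hΦ.symm)⟩

theorem continuousOn_of_level (hΦa : ∀ y, 0 < y → StrictAntiOn (Φ · y) (Ici 0))
    (hΦc : ∀ y, 0 < y → ContinuousOn (Φ · y) (Ici 0))
    (hΦy : ∀ a, 0 ≤ a → StrictAntiOn (Φ a) (Ioi 0)) (hb : ∀ a, 0 ≤ a → 0 < b a ∧ Φ a (b a) = c) :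
    ContinuousOn b (Ici 0) :=
  StrictMonoOn.continuousOn_Ici_of_surjOn_Icc (f := OrderDual.toDual ∘ b)
    (strictAntiOn_of_level hΦa (fun a ha => (hΦy a ha).antitoneOn) hb).dual_right
    fun _ hx _ hxx' _ hv => surjOn_Icc_of_level hΦc hΦy hb hx hxx' ⟨hv.2, hv.1⟩

end LevelCurve

namespace QuarticRadical

/-- Here `y` stands for `b_a`. -/
def radicand (α a y z : ℝ) : ℝ := α ^ 2 * z ^ 4 + (α ^ 2 + y ^ 2 + a ^ 4) * z ^ 2 + y ^ 2

variable {α a y z : ℝ}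

lemma continuous_radicand (α z : ℝ) : Continuous fun p : ℝ × ℝ => radicand α p.1 p.2 z := by
  unfold radicand; fun_prop

lemma measurable_radicand (α a y : ℝ) : Measurable (radicand α a y) := by
  unfold radicand; fun_prop

lemma half_mul_one_add_sq_le_sqrt_radicand {m : ℝ} (hm : 0 ≤ m) (hmα : m ≤ α) (hmy : m ≤ y)
    (a z : ℝ) : m * (1 + z ^ 2) / 2 ≤ √(radicand α a y z) := by
  have hα2 : m ^ 2 ≤ α ^ 2 := pow_le_pow_left₀ hm hmα 2
  have hy2 : m ^ 2 ≤ y ^ 2 := pow_le_pow_left₀ hm hmy 2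
  refine Real.le_sqrt_of_sq_le ?_
  unfold radicand
  nlinarith [mul_le_mul_of_nonneg_right hα2 (by positivity : 0 ≤ z ^ 4),
    mul_le_mul_of_nonneg_right hα2 (sq_nonneg z), sq_nonneg (a ^ 2 * z), sq_nonneg (y * z),
    sq_nonneg (m * z), sq_nonneg (m * z ^ 2), sq_nonneg (m * (1 - z ^ 2))]

lemma sq_mul_le_sqrt_radicand (α a y z : ℝ) : a ^ 2 * z ≤ √(radicand α a y z) := by
  refine Real.le_sqrt_of_sq_le ?_
  unfold radicand
  nlinarith [sq_nonneg (α * z ^ 2), sq_nonneg (α * z), sq_nonneg (y * z), sq_nonneg y]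

lemma mul_sq_le_sqrt_radicand (α a y z : ℝ) : α * z ^ 2 ≤ √(radicand α a y z) := by
  refine Real.le_sqrt_of_sq_le ?_
  unfold radicand
  nlinarith [sq_nonneg (α * z), sq_nonneg (y * z), sq_nonneg (a ^ 2 * z), sq_nonneg y]

lemma sqrt_radicand_pos (hα : 0 < α) (hy : 0 < y) (a z : ℝ) : 0 < √(radicand α a y z) :=
  lt_of_lt_of_le (by positivity)
    (half_mul_one_add_sq_le_sqrt_radicand (lt_min hα hy).le (min_le_left _ _) (min_le_right _ _)
      a z)

lemma abs_div_sqrt_radicand_le {w : ℝ → ℝ} (hw : ∀ z, |w z| ≤ 1) {m : ℝ} (hm : 0 < m)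
    (hmα : m ≤ α) (hmy : m ≤ y) (a z : ℝ) :
    |w z / √(radicand α a y z)| ≤ 2 / m * (1 + z ^ 2)⁻¹ := by
  have hlow := half_mul_one_add_sq_le_sqrt_radicand hm.le hmα hmy a z
  have hpos : 0 < m * (1 + z ^ 2) / 2 := by positivity
  rw [abs_div, abs_of_nonneg (Real.sqrt_nonneg _)]
  calc |w z| / √(radicand α a y z) ≤ 1 / (m * (1 + z ^ 2) / 2) :=
        div_le_div₀ zero_le_one (hw z) hpos hlow
    _ = 2 / m * (1 + z ^ 2)⁻¹ := by field_simp

lemma integrableOn_div_sqrt_radicand {w : ℝ → ℝ} (hwm : Measurable w) (hw : ∀ z, |w z| ≤ 1)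
    (hα : 0 < α) (hy : 0 < y) (a : ℝ) :
    IntegrableOn (fun z => w z / √(radicand α a y z)) (Ioi 0) :=
  Integrable.mono' ((integrable_inv_one_add_sq.const_mul (2 / min α y)).integrableOn)
    (hwm.div (measurable_radicand α a y).sqrt).aestronglyMeasurable
    (Eventually.of_forall fun z =>
      abs_div_sqrt_radicand_le hw (lt_min hα hy) (min_le_left _ _) (min_le_right _ _) a z)

lemma continuousAt_integral_div_sqrt_radicand {w : ℝ → ℝ} (hwc : Continuous w)
    (hw : ∀ z, |w z| ≤ 1) (hα : 0 < α) {a₀ y₀ : ℝ} (hy₀ : 0 < y₀) :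
    ContinuousAt (fun p : ℝ × ℝ => ∫ z in Ioi 0, w z / √(radicand α p.1 p.2 z)) (a₀, y₀) := by
  set m := min α (y₀ / 2)
  have hm : 0 < m := lt_min hα (half_pos hy₀)
  have hnear : ∀ᶠ p : ℝ × ℝ in 𝓝 (a₀, y₀), y₀ / 2 < p.2 :=
    continuous_snd.continuousAt.eventually (eventually_gt_nhds (half_lt_self hy₀))
  refine continuousAt_of_dominated (bound := fun z => 2 / m * (1 + z ^ 2)⁻¹)
    (Eventually.of_forall fun p =>
      (hwc.measurable.div (measurable_radicand α p.1 p.2).sqrt).aestronglyMeasurable)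
    ?_ (integrable_inv_one_add_sq.const_mul _).integrableOn
    (Eventually.of_forall fun z => ?_)
  · filter_upwards [hnear] with p hp
    exact Eventually.of_forall fun z =>
      abs_div_sqrt_radicand_le hw hm (min_le_left _ _) ((min_le_right _ _).trans hp.le) p.1 z
  · exact continuousAt_const.div
      (continuous_sqrt.continuousAt.comp (continuous_radicand α z).continuousAt)
      (sqrt_radicand_pos hα hy₀ a₀ z).ne'

/-- `F α a (b a) = π / 2` is the condition defining `b`, and `a² G α a (b a)` is the quantity
required to equal `β / 2`. -/
noncomputable def F (α a y : ℝ) : ℝ := ∫ z in Ioi 0, 1 / √(radicand α a y z)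

noncomputable def G (α a y : ℝ) : ℝ := ∫ z in Ioi 0, 1 / ((1 + z ^ 2) * √(radicand α a y z))

lemma G_eq_integral_inv_div (α a y : ℝ) :
    G α a y = ∫ z in Ioi 0, (1 + z ^ 2)⁻¹ / √(radicand α a y z) := by
  simp only [G, mul_inv, div_eq_mul_inv, one_mul]

lemma F_lt_F_of_radicand_lt (hα : 0 < α) {a' y' : ℝ} (hy : 0 < y) (hy' : 0 < y')
    (h : ∀ z ∈ Ioi (0 : ℝ), radicand α a y z < radicand α a' y' z) : F α a' y' < F α a y :=
  setIntegral_lt_setIntegral measurableSet_Ioi (by simp)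
    (integrableOn_div_sqrt_radicand (w := fun _ => 1) measurable_const (by simp) hα hy' a')
    (integrableOn_div_sqrt_radicand (w := fun _ => 1) measurable_const (by simp) hα hy a)
    fun z hz => one_div_lt_one_div_of_lt (sqrt_radicand_pos hα hy a z)
      (Real.sqrt_lt_sqrt (Real.sqrt_pos.1 (sqrt_radicand_pos hα hy a z)).le (h z hz))

lemma F_strictAntiOn_right (hα : 0 < α) (a : ℝ) : StrictAntiOn (F α a) (Ioi 0) := by
  intro y hy y' hy' hyy'
  refine F_lt_F_of_radicand_lt hα hy hy' fun z _ => ?_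
  have : y ^ 2 < y' ^ 2 := pow_lt_pow_left₀ hyy' (le_of_lt hy) two_ne_zero
  unfold radicand
  nlinarith [sq_nonneg z]

lemma F_strictAntiOn_left (hα : 0 < α) (hy : 0 < y) : StrictAntiOn (fun a => F α a y) (Ici 0) := by
  intro a ha a' _ haa'
  refine F_lt_F_of_radicand_lt hα hy hy fun z hz => ?_
  have : a ^ 4 < a' ^ 4 := pow_lt_pow_left₀ haa' ha four_ne_zero
  have : 0 < z ^ 2 := pow_pos hz 2
  unfold radicand
  nlinarith

lemma continuous_F_left (hα : 0 < α) (hy : 0 < y) : Continuous fun a => F α a y :=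
  continuous_iff_continuousAt.2 fun a =>
    (continuousAt_integral_div_sqrt_radicand (w := fun _ => 1) continuous_const (by simp) hα
      hy).comp (f := fun a => (a, y)) (by fun_prop)

lemma continuousAt_G (hα : 0 < α) {a₀ y₀ : ℝ} (hy₀ : 0 < y₀) :
    ContinuousAt (fun p : ℝ × ℝ => G α p.1 p.2) (a₀, y₀) := by
  simp only [G_eq_integral_inv_div]
  exact continuousAt_integral_div_sqrt_radicand (by fun_prop (disch := intro; positivity))
    abs_inv_one_add_sq_le_one hα hy₀

lemma F_sub_G_eq (hα : 0 < α) (hy : 0 < y) (a : ℝ) :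
    F α a y - G α a y = ∫ z in Ioi 0, z ^ 2 / (1 + z ^ 2) / √(radicand α a y z) := by
  rw [F, G_eq_integral_inv_div, ← integral_sub
    (integrableOn_div_sqrt_radicand (w := fun _ => 1) measurable_const (by simp) hα hy a)
    (integrableOn_div_sqrt_radicand (by fun_prop) abs_inv_one_add_sq_le_one hα hy a)]
  congr 1 with z
  rw [← sub_div]
  field_simp
  ring

lemma F_sub_G_le (hα : 0 < α) (hy : 0 < y) (ha : 0 < a) :
    F α a y - G α a y ≤ 1 / (2 * a) + (π / 2 - arctan a) / α := by
  have hw : ∀ z : ℝ, |z ^ 2 / (1 + z ^ 2)| ≤ 1 := fun z => by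
    rw [abs_of_nonneg (by positivity), div_le_one (by positivity)]
    linarith
  have hint := integrableOn_div_sqrt_radicand (by fun_prop) hw hα hy a
  have hnear : ∀ z ∈ Ioc 0 a, z ^ 2 / (1 + z ^ 2) / √(radicand α a y z) ≤ 1 / (2 * a ^ 2) := by
    rintro z ⟨hz, -⟩
    calc z ^ 2 / (1 + z ^ 2) / √(radicand α a y z) ≤ z ^ 2 / (1 + z ^ 2) / (a ^ 2 * z) :=
          div_le_div_of_nonneg_left (by positivity) (by positivity)
            (sq_mul_le_sqrt_radicand α a y z)
      _ ≤ 1 / (2 * a ^ 2) := by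
          rw [div_div, div_le_div_iff₀ (by positivity) (by positivity)]
          nlinarith [mul_nonneg (mul_nonneg (sq_nonneg a) hz.le) (sq_nonneg (z - 1))]
  have hfar : ∀ z ∈ Ioi a, z ^ 2 / (1 + z ^ 2) / √(radicand α a y z) ≤ α⁻¹ * (1 + z ^ 2)⁻¹ := by
    intro z hz
    have hz : 0 < z := ha.trans hz
    calc z ^ 2 / (1 + z ^ 2) / √(radicand α a y z) ≤ z ^ 2 / (1 + z ^ 2) / (α * z ^ 2) :=
          div_le_div_of_nonneg_left (by positivity) (by positivity)
            (mul_sq_le_sqrt_radicand α a y z)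
      _ = α⁻¹ * (1 + z ^ 2)⁻¹ := by field_simp
  rw [F_sub_G_eq hα hy a, ← Ioc_union_Ioi_eq_Ioi ha.le, setIntegral_union (Ioc_disjoint_Ioi le_rfl)
    measurableSet_Ioi (hint.mono_set Ioc_subset_Ioi_self) (hint.mono_set (Ioi_subset_Ioi ha.le))]
  gcongr
  · calc _ ≤ ∫ _ in Ioc 0 a, 1 / (2 * a ^ 2) :=
          setIntegral_mono_on (hint.mono_set Ioc_subset_Ioi_self)
            (integrableOn_const (by simp)) measurableSet_Ioc hnear
      _ = 1 / (2 * a) := by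
          rw [setIntegral_const, measureReal_def, Real.volume_Ioc, sub_zero,
            ENNReal.toReal_ofReal ha.le, smul_eq_mul]
          field_simp
  · calc _ ≤ ∫ z in Ioi a, α⁻¹ * (1 + z ^ 2)⁻¹ :=
          setIntegral_mono_on (hint.mono_set (Ioi_subset_Ioi ha.le))
            (integrable_inv_one_add_sq.const_mul _).integrableOn measurableSet_Ioi hfar
      _ = (π / 2 - arctan a) / α := by
          rw [integral_const_mul, integral_Ioi_inv_one_add_sq, inv_mul_eq_div]

lemma tendsto_sq_mul_G_atTop (hα : 0 < α) {b : ℝ → ℝ}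
    (hb : ∀ᶠ a in atTop, 0 < b a ∧ F α a (b a) = π / 2) :
    Tendsto (fun a => a ^ 2 * G α a (b a)) atTop atTop := by
  have hlim : Tendsto (fun a => π / 2 - (1 / (2 * a) + (π / 2 - arctan a) / α)) atTop
      (𝓝 (π / 2)) := by
    have hinv : Tendsto (fun a : ℝ => 1 / (2 * a)) atTop (𝓝 0) :=
      tendsto_const_nhds.div_atTop (tendsto_id.const_mul_atTop two_pos)
    have harctan := ((tendsto_const_nhds (x := π / 2)).sub
      (tendsto_nhds_of_tendsto_nhdsWithin tendsto_arctan_atTop)).div_const α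
    rw [sub_self, zero_div] at harctan
    simpa only [add_zero, sub_zero] using (tendsto_const_nhds (x := π / 2)).sub (hinv.add harctan)
  refine tendsto_atTop_mono' _ ?_
    ((tendsto_pow_atTop two_ne_zero).atTop_mul_pos (by positivity) hlim)
  filter_upwards [hb, eventually_gt_atTop 0] with a ⟨hba, hFa⟩ ha
  have := F_sub_G_le hα hba ha
  gcongr
  linarith

end QuarticRadical

open QuarticRadical in
/-- For `α > 0`, `β ≥ 0`, with `b a > 0` the unique constant making
`∫₀^∞ dz/√(α²z⁴ + (α² + (b a)² + a⁴)z² + (b a)²) = π/2` for each `a ≥ 0`, there exists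
`a ≥ 0` with `a² ∫₀^∞ dz/((1 + z²)√(α²z⁴ + (α² + (b a)² + a⁴)z² + (b a)²)) = β/2`. -/
theorem stmt5 (α β : ℝ) (hα : 0 < α) (hβ : 0 ≤ β) (b : ℝ → ℝ)
    (hb : ∀ a : ℝ, 0 ≤ a → 0 < b a ∧
      (∫ z in Set.Ioi (0 : ℝ),
        1 / Real.sqrt (α ^ 2 * z ^ 4 + (α ^ 2 + (b a) ^ 2 + a ^ 4) * z ^ 2 + (b a) ^ 2)) =
        π / 2) :
    ∃ a : ℝ, 0 ≤ a ∧
      a ^ 2 * (∫ z in Set.Ioi (0 : ℝ),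
        1 / ((1 + z ^ 2) *
          Real.sqrt (α ^ 2 * z ^ 4 + (α ^ 2 + (b a) ^ 2 + a ^ 4) * z ^ 2 + (b a) ^ 2))) =
        β / 2 := by
  have hlevel : ∀ a, 0 ≤ a → 0 < b a ∧ F α a (b a) = π / 2 := hb
  have hb_cont : ContinuousOn b (Ici 0) :=
    continuousOn_of_level (fun _ hy => F_strictAntiOn_left hα hy)
      (fun _ hy => (continuous_F_left hα hy).continuousOn) (fun a _ => F_strictAntiOn_right hα a)
      hlevel
  have hcont : ContinuousOn (fun a => a ^ 2 * G α a (b a)) (Ici 0) := fun a ha =>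
    (continuous_pow 2).continuousWithinAt.mul <|
      ContinuousAt.comp_continuousWithinAt (g := fun p : ℝ × ℝ => G α p.1 p.2)
        (f := fun a => (a, b a)) (continuousAt_G hα (hlevel a ha).1)
        (continuousWithinAt_id.prodMk (hb_cont a ha))
  obtain ⟨a, ha, hβa⟩ := intermediate_value_Ici hcont
    (tendsto_sq_mul_G_atTop hα ((eventually_ge_atTop 0).mono hlevel))
    (show β / 2 ∈ Ici (0 ^ 2 * G α 0 (b 0)) by simpa using div_nonneg hβ zero_le_two)
  exact ⟨a, ha, hβa⟩
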